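/- (Three-bidder partial disclosure beats both extremes.) Let n = 3, v_i = 1 for all i, and let g be the product prior under which each r_i is independently 0 with probability 2/3 and 1 with probability 1/3. Define the product information structure x(r,s) = ∏_{i=1}^3 κ(r_i, s_i), where κ(0,0) = 1/4, κ(0,4/9) = 5/12, κ(1,4/9) = 1/3, and κ(1,0) = 0. Then x is a calibrated information structure for g with Rev(x) = 3/8; moreover, the full-disclosure structure x_F (where x_F(r,s) = g(r) if s = r and 0 otherwise) has Rev(x_F) = 7/27, the no-disclosure structure x_N (where x_N(r,s) = g(r) if s = (1/3,1/3,1/3) and 0 otherwise) has Rev(x_N) = 1/3, and 3/8 is strictly greater than both. -/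

import Mathlib

open scoped Classical

noncomputable section

/-- A finitely supported probability mass function on CTR vectors in [0,1]ⁿ. -/
def IsPriorN {n : ℕ} (g : (Fin n → ℝ) → ℝ) : Prop :=
  (Function.support g).Finite ∧ (∀ r, 0 ≤ g r) ∧
  (∀ r, g r ≠ 0 → ∀ i, 0 ≤ r i ∧ r i ≤ 1) ∧ (∑ᶠ r, g r) = 1

/-- An information structure for the prior `g`: finitely supported, nonnegative,
signals in [0,1]ⁿ, with `r`-marginal equal to `g`. -/
def IsInfoN {n : ℕ} (g : (Fin n → ℝ) → ℝ) (x : (Fin n → ℝ) × (Fin n → ℝ) → ℝ) : Prop :=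
  (Function.support x).Finite ∧ (∀ p, 0 ≤ x p) ∧
  (∀ p, x p ≠ 0 → ∀ i, 0 ≤ p.2 i ∧ p.2 i ≤ 1) ∧ (∀ r, (∑ᶠ s, x (r, s)) = g r)

/-- Calibration: the posterior mean of `rᵢ` given any signal value `c` of bidder `i`
equals `c`. -/
def CalibratedN {n : ℕ} (x : (Fin n → ℝ) × (Fin n → ℝ) → ℝ) : Prop :=
  ∀ i : Fin n, ∀ c : ℝ, 0 ≤ c → c ≤ 1 →
    (∑ᶠ p : (Fin n → ℝ) × (Fin n → ℝ), if p.2 i = c then x p * (p.1 i - c) else 0) = 0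

/-- The maximal value-weighted signal `max_j v_j s_j`. -/
def maxScore {n : ℕ} (v s : Fin n → ℝ) : ℝ := ⨆ i, v i * s i

/-- The set of winners `W(s) = {i : v_i s_i = max_j v_j s_j}`. -/
def winners {n : ℕ} (v s : Fin n → ℝ) : Finset (Fin n) :=
  Finset.univ.filter fun i => v i * s i = maxScore v s

/-- The highest competing value-weighted signal `max_{j ≠ i} v_j s_j`. -/
def maxOther {n : ℕ} (v s : Fin n → ℝ) (i : Fin n) : ℝ :=
  ⨆ j : {j : Fin n // j ≠ i}, v j.1 * s j.1

/-- Expected revenue of the click-through auction with uniform tie-breaking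
(division by zero is zero in Lean, matching the convention t/0 = 0). -/
def RevN {n : ℕ} (v : Fin n → ℝ) (x : (Fin n → ℝ) × (Fin n → ℝ) → ℝ) : ℝ :=
  ∑ᶠ p : (Fin n → ℝ) × (Fin n → ℝ), x p *
    (((winners v p.2).card : ℝ)⁻¹ *
      ∑ i ∈ winners v p.2, p.1 i * (maxOther v p.2 i / p.2 i))

/-- The product prior on three bidders: each CTR is independently 0 w.p. 2/3 and
1 w.p. 1/3. -/
def gThree : (Fin 3 → ℝ) → ℝ := fun r =>
  ∏ i : Fin 3, (if r i = 0 then (2:ℝ)/3 else if r i = 1 then 1/3 else 0)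

/-- Per-bidder signalling kernel: joint probability of CTR value `a` and signal
value `c`. -/
def kernelThree (a c : ℝ) : ℝ :=
  if a = 0 ∧ c = 0 then 1/4
  else if a = 0 ∧ c = 4/9 then 5/12
  else if a = 1 ∧ c = 4/9 then 1/3
  else 0

/-- The product information structure built from the per-bidder kernel. -/
def xThree : (Fin 3 → ℝ) × (Fin 3 → ℝ) → ℝ := fun p =>
  ∏ i : Fin 3, kernelThree (p.1 i) (p.2 i)

/-- Full disclosure: the signal equals the CTR vector. -/
def xThreeFull : (Fin 3 → ℝ) × (Fin 3 → ℝ) → ℝ := fun p =>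
  if p.2 = p.1 then gThree p.1 else 0

/-- No disclosure: the signal is the constant expected CTR vector (1/3,1/3,1/3). -/
def xThreeNo : (Fin 3 → ℝ) × (Fin 3 → ℝ) → ℝ := fun p =>
  if p.2 = (fun _ => (1:ℝ)/3) then gThree p.1 else 0

/-!
All three structures are products of a per-bidder joint law `κ a c` of CTR `a` and signal `c`
(full disclosure: `c = a`; no disclosure: `c = 1/3`). When every `κ` is calibrated, the CTR
`rᵢ` has conditional mean `sᵢ` even given the whole signal vector `s`, and since the GSP payment
is linear in the CTRs, the revenue is the expected payment at `r = s`, i.e. the expected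
second-highest signal under the product law of signals. For `kernelThree` each signal is `4/9`
with probability `3/4` and `0` otherwise, so the revenue is
`4/9 · P(at least two signals are 4/9) = 4/9 · 27/32 = 3/8`.
-/

open Function Finset

theorem finsum_pi_prod {ι α M : Type*} [Fintype ι] [CommSemiring M] {f : ι → α → M}
    {T : ι → Finset α} (hf : ∀ i, support (f i) ⊆ T i) :
    ∑ᶠ s : ι → α, ∏ i, f i (s i) = ∏ i, ∑ᶠ a, f i a := by
  rw [finsum_eq_sum_of_support_subset _ (s := Fintype.piFinset T) fun s hs => ?_,
    ← prod_univ_sum]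
  · exact prod_congr rfl fun i _ => (finsum_eq_sum_of_support_subset _ (hf i)).symm
  · simpa using fun i => hf i fun h => hs (prod_eq_zero (mem_univ i) h)

theorem finsum_fin_three_eq_sum {α M : Type*} [AddCommMonoid M] (T : Finset α)
    {F : (Fin 3 → α) → M} (hF : ∀ s, F s ≠ 0 → ∀ i, s i ∈ T) :
    ∑ᶠ s, F s = ∑ a ∈ T, ∑ b ∈ T, ∑ c ∈ T, F ![a, b, c] := by
  rw [finsum_eq_sum_of_support_subset F (s := Fintype.piFinset fun _ => T)
      fun s hs => by simpa using hF s hs]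
  simp_rw [← sum_product']
  refine sum_nbij' (fun s => (s 0, s 1, s 2)) (fun t => ![t.1, t.2.1, t.2.2]) ?_ ?_ ?_ ?_ ?_
  · intro s hs; simp_all [Fintype.mem_piFinset]
  · intro t ht; simp_all [Fintype.mem_piFinset, Fin.forall_fin_succ]
  · intro s _; ext i; fin_cases i <;> rfl
  · intro t _; rfl
  · intro s _; congr; ext i; fin_cases i <;> rfl

section FiniteSupport

variable {α β M : Type*} [CommSemiring M] {x : α × β → M} {R : Finset α} {S : Finset β}

theorem finsum_mul_eq_sum_sum (hx : support x ⊆ ↑R ×ˢ ↑S) (F : α × β → M) :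
    ∑ᶠ p, x p * F p = ∑ s ∈ S, ∑ r ∈ R, x (r, s) * F (r, s) := by
  rw [finsum_eq_sum_of_support_subset _ (s := R ×ˢ S) fun p hp => ?_, sum_product_right]
  simpa using hx (left_ne_zero_of_mul hp)

theorem finsum_slice_mul_eq_sum (hx : support x ⊆ ↑R ×ˢ ↑S) (s : β) (G : α → M) :
    ∑ᶠ r, x (r, s) * G r = ∑ r ∈ R, x (r, s) * G r :=
  finsum_eq_sum_of_support_subset _ fun _ hr => (hx (left_ne_zero_of_mul hr)).1

theorem finsum_slice_eq_sum (hx : support x ⊆ ↑R ×ˢ ↑S) (s : β) :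
    ∑ᶠ r, x (r, s) = ∑ r ∈ R, x (r, s) := by
  simpa using finsum_slice_mul_eq_sum hx s 1

end FiniteSupport

/-- Calibration conditional on the whole signal vector `s`, not only on `sᵢ`. -/
def JointlyCalibrated {n : ℕ} (x : (Fin n → ℝ) × (Fin n → ℝ) → ℝ) : Prop :=
  ∀ s i, ∑ᶠ r, x (r, s) * r i = s i * ∑ᶠ r, x (r, s)

def gspRevenue {n : ℕ} (v s r : Fin n → ℝ) : ℝ :=
  ((winners v s).card : ℝ)⁻¹ * ∑ i ∈ winners v s, r i * (maxOther v s i / s i)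

namespace JointlyCalibrated

variable {n : ℕ} {x : (Fin n → ℝ) × (Fin n → ℝ) → ℝ} {R S : Finset (Fin n → ℝ)}

theorem sum_mul_eq (hcal : JointlyCalibrated x) (hx : support x ⊆ ↑R ×ˢ ↑S)
    (s : Fin n → ℝ) (i : Fin n) :
    ∑ r ∈ R, x (r, s) * r i = s i * ∑ r ∈ R, x (r, s) := by
  rw [← finsum_slice_mul_eq_sum hx, ← finsum_slice_eq_sum hx, hcal]

theorem calibratedN (hcal : JointlyCalibrated x) (hx : support x ⊆ ↑R ×ˢ ↑S) :
    CalibratedN x := by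
  intro i c _ _
  have hite : ∀ p : (Fin n → ℝ) × (Fin n → ℝ), (if p.2 i = c then x p * (p.1 i - c) else 0) =
      x p * if p.2 i = c then p.1 i - c else 0 := fun p => by rw [mul_ite, mul_zero]
  simp_rw [hite, finsum_mul_eq_sum_sum hx]
  refine sum_eq_zero fun s _ => ?_
  by_cases hs : s i = c
  · simp only [hs, if_true, mul_sub, sum_sub_distrib, ← sum_mul, hcal.sum_mul_eq hx]
    ring
  · simp [hs]

theorem revN_eq (hcal : JointlyCalibrated x) (hx : support x ⊆ ↑R ×ˢ ↑S) (v : Fin n → ℝ) :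
    RevN v x = ∑ᶠ s, (∑ᶠ r, x (r, s)) * gspRevenue v s s := by
  change ∑ᶠ p, x p * gspRevenue v p.2 p.1 = _
  rw [finsum_mul_eq_sum_sum hx, finsum_eq_sum_of_support_subset (s := S) _ fun s hs => ?_]
  · refine sum_congr rfl fun s _ => ?_
    simp only [gspRevenue, finsum_slice_eq_sum hx, mul_sum]
    rw [sum_comm]
    refine sum_congr rfl fun i _ => ?_
    calc ∑ r ∈ R, x (r, s) * (((winners v s).card : ℝ)⁻¹ * (r i * (maxOther v s i / s i)))
        = (∑ r ∈ R, x (r, s) * r i) * (((winners v s).card : ℝ)⁻¹ * (maxOther v s i / s i)) := by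
          rw [sum_mul]; exact sum_congr rfl fun r _ => by ring
      _ = _ := by rw [hcal.sum_mul_eq hx]; ring
  · have hmass := left_ne_zero_of_mul hs
    rw [finsum_slice_eq_sum hx] at hmass
    obtain ⟨r, -, hr⟩ := exists_ne_zero_of_sum_ne_zero hmass
    exact (hx hr).2

end JointlyCalibrated

def productInfo {n : ℕ} (κ : ℝ → ℝ → ℝ) : (Fin n → ℝ) × (Fin n → ℝ) → ℝ :=
  fun p => ∏ i, κ (p.1 i) (p.2 i)

section ProductInfo

variable {n : ℕ} {κ : ℝ → ℝ → ℝ} {A C : Finset ℝ}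

theorem support_productInfo_subset (hκ : ∀ a c, κ a c ≠ 0 → a ∈ A ∧ c ∈ C) :
    support (productInfo (n := n) κ) ⊆
      ↑(Fintype.piFinset fun _ : Fin n => A) ×ˢ ↑(Fintype.piFinset fun _ : Fin n => C) := by
  intro p hp
  simpa [forall_and] using fun i => hκ _ _ fun h => hp (prod_eq_zero (mem_univ i) h)

theorem finsum_productInfo_fst (hκ : ∀ a c, κ a c ≠ 0 → a ∈ A ∧ c ∈ C) (s : Fin n → ℝ) :
    ∑ᶠ r, productInfo κ (r, s) = ∏ i, ∑ᶠ a, κ a (s i) :=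
  finsum_pi_prod (f := fun i a => κ a (s i)) (T := fun _ => A) fun _ _ ha => (hκ _ _ ha).1

theorem finsum_productInfo_snd (hκ : ∀ a c, κ a c ≠ 0 → a ∈ A ∧ c ∈ C) (r : Fin n → ℝ) :
    ∑ᶠ s, productInfo κ (r, s) = ∏ i, ∑ᶠ c, κ (r i) c :=
  finsum_pi_prod (f := fun i c => κ (r i) c) (T := fun _ => C) fun _ _ hc => (hκ _ _ hc).2

theorem productInfo_isInfoN {g₁ : ℝ → ℝ} (hκ : ∀ a c, κ a c ≠ 0 → a ∈ A ∧ c ∈ C)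
    (hnonneg : ∀ a c, 0 ≤ κ a c) (hC : ∀ c ∈ C, 0 ≤ c ∧ c ≤ 1)
    (hmarg : ∀ a, ∑ᶠ c, κ a c = g₁ a) :
    IsInfoN (fun r => ∏ i, g₁ (r i)) (productInfo (n := n) κ) := by
  have hsupp := support_productInfo_subset (n := n) hκ
  refine ⟨?_, fun p => prod_nonneg fun i _ => hnonneg _ _, fun p hp i => ?_, fun r => ?_⟩
  · exact (Set.toFinite _).subset hsupp
  · exact hC _ (Fintype.mem_piFinset.1 (hsupp hp).2 i)
  · simp only [finsum_productInfo_snd hκ, hmarg]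

theorem productInfo_jointlyCalibrated (hκ : ∀ a c, κ a c ≠ 0 → a ∈ A ∧ c ∈ C)
    (hcal : ∀ c, ∑ᶠ a, κ a c * a = c * ∑ᶠ a, κ a c) :
    JointlyCalibrated (productInfo (n := n) κ) := by
  intro s i
  have hsplit : ∀ r : Fin n → ℝ,
      productInfo κ (r, s) * r i = ∏ j, κ (r j) (s j) * (if j = i then r j else 1) := fun r => by
    rw [prod_mul_distrib, Fintype.prod_ite_eq']; rfl
  have hfactor : ∀ j, ∑ᶠ a, κ a (s j) * (if j = i then a else 1) =
      (if j = i then s i else 1) * ∑ᶠ a, κ a (s j) := fun j => by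
    split_ifs with h
    · subst h; exact hcal _
    · simp
  simp_rw [hsplit]
  rw [finsum_pi_prod (f := fun j a => κ a (s j) * if j = i then a else 1) (T := fun _ => A)
      fun j a ha => (hκ _ _ (left_ne_zero_of_mul ha)).1,
    finsum_productInfo_fst hκ]
  simp_rw [hfactor, prod_mul_distrib, Fintype.prod_ite_eq']

theorem revN_productInfo (hκ : ∀ a c, κ a c ≠ 0 → a ∈ A ∧ c ∈ C)
    (hcal : ∀ c, ∑ᶠ a, κ a c * a = c * ∑ᶠ a, κ a c) (v : Fin n → ℝ) :
    RevN v (productInfo κ) = ∑ᶠ s, (∏ i, ∑ᶠ a, κ a (s i)) * gspRevenue v s s := by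
  simp_rw [(productInfo_jointlyCalibrated hκ hcal).revN_eq (support_productInfo_subset hκ),
    finsum_productInfo_fst hκ]

end ProductInfo

section BinaryCTR

variable {κ : ℝ → ℝ → ℝ} {C : Finset ℝ}

theorem finsum_kernel_of_binary (hκ : ∀ a c, κ a c ≠ 0 → a ∈ ({0, 1} : Finset ℝ) ∧ c ∈ C)
    (c : ℝ) : ∑ᶠ a, κ a c = κ 0 c + κ 1 c := by
  rw [finsum_eq_sum_of_support_subset _ (s := {0, 1}) fun a ha => (hκ a c ha).1,
    sum_pair zero_ne_one]

theorem kernel_calibrated_of_binary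
    (hκ : ∀ a c, κ a c ≠ 0 → a ∈ ({0, 1} : Finset ℝ) ∧ c ∈ C)
    (hcal : ∀ c, κ 1 c = c * (κ 0 c + κ 1 c)) (c : ℝ) :
    ∑ᶠ a, κ a c * a = c * ∑ᶠ a, κ a c := by
  rw [finsum_eq_sum_of_support_subset _ (s := {0, 1})
      fun a ha => (hκ a c (left_ne_zero_of_mul ha)).1,
    sum_pair zero_ne_one, finsum_kernel_of_binary hκ]
  simpa using hcal c

theorem revN_productInfo_fin_three
    (hκ : ∀ a c, κ a c ≠ 0 → a ∈ ({0, 1} : Finset ℝ) ∧ c ∈ C)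
    (hcal : ∀ c, κ 1 c = c * (κ 0 c + κ 1 c)) (v : Fin 3 → ℝ) :
    RevN v (productInfo κ) = ∑ a ∈ C, ∑ b ∈ C, ∑ c ∈ C,
      (κ 0 a + κ 1 a) * (κ 0 b + κ 1 b) * (κ 0 c + κ 1 c) *
        gspRevenue v ![a, b, c] ![a, b, c] := by
  rw [revN_productInfo (A := {0, 1}) hκ (kernel_calibrated_of_binary hκ hcal),
    finsum_fin_three_eq_sum C fun s hs i => ?_]
  · simp [Fin.prod_univ_three, finsum_kernel_of_binary hκ]
  · by_contra hi
    have hzero : ∀ a, κ a (s i) = 0 := fun a => by_contra fun h => hi (hκ a _ h).2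
    exact hs (by rw [prod_eq_zero (mem_univ i) (by simp [hzero]), zero_mul])

end BinaryCTR

theorem maxScore_le_iff {n : ℕ} [NeZero n] (v s : Fin n → ℝ) (c : ℝ) :
    maxScore v s ≤ c ↔ ∀ j, v j * s j ≤ c :=
  ciSup_le_iff (Set.finite_range _).bddAbove

theorem maxOther_le_iff {n : ℕ} (v s : Fin n → ℝ) {i j₀ : Fin n} (hj₀ : j₀ ≠ i) (c : ℝ) :
    maxOther v s i ≤ c ↔ ∀ j ≠ i, v j * s j ≤ c := by
  have : Nonempty {j // j ≠ i} := ⟨⟨j₀, hj₀⟩⟩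
  rw [maxOther, ciSup_le_iff (Set.finite_range _).bddAbove, Subtype.forall]

theorem maxScore_one_fin_three (s : Fin 3 → ℝ) :
    maxScore (fun _ => 1) s = max (s 0) (max (s 1) (s 2)) :=
  eq_of_forall_ge_iff fun c => by simp [maxScore_le_iff, Fin.forall_fin_succ]

theorem maxOther_one_fin_three_zero (s : Fin 3 → ℝ) :
    maxOther (fun _ => 1) s 0 = max (s 1) (s 2) :=
  eq_of_forall_ge_iff fun c => by
    rw [maxOther_le_iff _ _ (show (1 : Fin 3) ≠ 0 by decide)]; simp [Fin.forall_fin_succ]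

theorem maxOther_one_fin_three_one (s : Fin 3 → ℝ) :
    maxOther (fun _ => 1) s 1 = max (s 0) (s 2) :=
  eq_of_forall_ge_iff fun c => by
    rw [maxOther_le_iff _ _ (show (0 : Fin 3) ≠ 1 by decide)]; simp [Fin.forall_fin_succ]

theorem maxOther_one_fin_three_two (s : Fin 3 → ℝ) :
    maxOther (fun _ => 1) s 2 = max (s 0) (s 1) :=
  eq_of_forall_ge_iff fun c => by
    rw [maxOther_le_iff _ _ (show (0 : Fin 3) ≠ 2 by decide)]; simp [Fin.forall_fin_succ]

theorem gspRevenue_one_fin_three (s r : Fin 3 → ℝ) :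
    gspRevenue (fun _ => 1) s r =
      ((if s 0 = max (s 0) (max (s 1) (s 2)) then 1 else 0) +
        (if s 1 = max (s 0) (max (s 1) (s 2)) then 1 else 0) +
        (if s 2 = max (s 0) (max (s 1) (s 2)) then 1 else 0))⁻¹ *
      ((if s 0 = max (s 0) (max (s 1) (s 2)) then r 0 * (max (s 1) (s 2) / s 0) else 0) +
        (if s 1 = max (s 0) (max (s 1) (s 2)) then r 1 * (max (s 0) (s 2) / s 1) else 0) +
        (if s 2 = max (s 0) (max (s 1) (s 2)) then r 2 * (max (s 0) (s 1) / s 2) else 0)) := by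
  simp only [gspRevenue, winners, card_filter, sum_filter, Fin.sum_univ_three, one_mul,
    Nat.cast_add, Nat.cast_ite, Nat.cast_one, Nat.cast_zero, maxScore_one_fin_three,
    maxOther_one_fin_three_zero, maxOther_one_fin_three_one, maxOther_one_fin_three_two]

def ctrPrior (a : ℝ) : ℝ := if a = 0 then 2/3 else if a = 1 then 1/3 else 0

theorem ctrPrior_ne_zero {a : ℝ} (h : ctrPrior a ≠ 0) : a ∈ ({0, 1} : Finset ℝ) := by
  unfold ctrPrior at h
  split_ifs at h <;> simp_all

theorem kernelThree_ne_zero (a c : ℝ) (h : kernelThree a c ≠ 0) :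
    a ∈ ({0, 1} : Finset ℝ) ∧ c ∈ ({0, 4/9} : Finset ℝ) := by
  unfold kernelThree at h
  split_ifs at h <;> simp_all

theorem kernelThree_nonneg (a c : ℝ) : 0 ≤ kernelThree a c := by
  unfold kernelThree; split_ifs <;> norm_num

theorem finsum_kernelThree (a : ℝ) : ∑ᶠ c, kernelThree a c = ctrPrior a := by
  rw [finsum_eq_sum_of_support_subset _ (s := {0, 4/9})
      fun c hc => (kernelThree_ne_zero a c hc).2,
    sum_pair (by norm_num)]
  rcases eq_or_ne a 0 with rfl | h₀
  · norm_num [kernelThree, ctrPrior]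
  rcases eq_or_ne a 1 with rfl | h₁
  · norm_num [kernelThree, ctrPrior]
  simp [kernelThree, ctrPrior, h₀, h₁]

theorem kernelThree_calibrated (c : ℝ) :
    kernelThree 1 c = c * (kernelThree 0 c + kernelThree 1 c) := by
  rcases eq_or_ne c 0 with rfl | h₀
  · norm_num [kernelThree]
  rcases eq_or_ne c (4/9) with rfl | h₄
  · norm_num [kernelThree]
  simp [kernelThree, h₀, h₄]

def fullKernel (a c : ℝ) : ℝ := if c = a then ctrPrior a else 0

theorem xThreeFull_eq : xThreeFull = productInfo fullKernel := by
  funext p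
  simp only [xThreeFull, productInfo, fullKernel, Fintype.prod_ite_zero, funext_iff]
  split_ifs <;> rfl

theorem fullKernel_ne_zero (a c : ℝ) (h : fullKernel a c ≠ 0) :
    a ∈ ({0, 1} : Finset ℝ) ∧ c ∈ ({0, 1} : Finset ℝ) := by
  unfold fullKernel at h
  split_ifs at h with hc
  · exact ⟨ctrPrior_ne_zero h, hc ▸ ctrPrior_ne_zero h⟩
  · exact absurd rfl h

theorem fullKernel_calibrated (c : ℝ) :
    fullKernel 1 c = c * (fullKernel 0 c + fullKernel 1 c) := by
  rcases eq_or_ne c 0 with rfl | h₀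
  · norm_num [fullKernel, ctrPrior]
  rcases eq_or_ne c 1 with rfl | h₁
  · norm_num [fullKernel, ctrPrior]
  simp [fullKernel, h₀, h₁]

def noKernel (a c : ℝ) : ℝ := if c = 1/3 then ctrPrior a else 0

theorem xThreeNo_eq : xThreeNo = productInfo noKernel := by
  funext p
  simp only [xThreeNo, productInfo, noKernel, Fintype.prod_ite_zero, funext_iff]
  split_ifs <;> rfl

theorem noKernel_ne_zero (a c : ℝ) (h : noKernel a c ≠ 0) :
    a ∈ ({0, 1} : Finset ℝ) ∧ c ∈ ({1/3} : Finset ℝ) := by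
  unfold noKernel at h
  split_ifs at h with hc
  · exact ⟨ctrPrior_ne_zero h, by simp [hc]⟩
  · exact absurd rfl h

theorem noKernel_calibrated (c : ℝ) :
    noKernel 1 c = c * (noKernel 0 c + noKernel 1 c) := by
  rcases eq_or_ne c (1/3) with rfl | h
  · norm_num [noKernel, ctrPrior]
  simp only [noKernel, if_neg h]
  ring

/-- with three bidders, the displayed independent partially-bundled
structure is calibrated with revenue 3/8, strictly beating full disclosure
(7/27) and no disclosure (1/3). -/
theorem three_bidder_partial_disclosure_beats_extremes :
    IsInfoN gThree xThree ∧ CalibratedN xThree ∧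
    RevN (fun _ : Fin 3 => (1:ℝ)) xThree = 3/8 ∧
    RevN (fun _ : Fin 3 => (1:ℝ)) xThreeFull = 7/27 ∧
    RevN (fun _ : Fin 3 => (1:ℝ)) xThreeNo = 1/3 ∧
    (7:ℝ)/27 < 3/8 ∧ (1:ℝ)/3 < 3/8 := by
  refine ⟨?_, ?_, ?_, ?_, ?_, by norm_num, by norm_num⟩
  · exact productInfo_isInfoN kernelThree_ne_zero kernelThree_nonneg (by norm_num)
      finsum_kernelThree
  · exact (productInfo_jointlyCalibrated kernelThree_ne_zero
      (kernel_calibrated_of_binary kernelThree_ne_zero kernelThree_calibrated)).calibratedN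
      (support_productInfo_subset kernelThree_ne_zero)
  · rw [show xThree = productInfo kernelThree from rfl,
      revN_productInfo_fin_three kernelThree_ne_zero kernelThree_calibrated]
    norm_num [sum_pair, kernelThree, gspRevenue_one_fin_three, Matrix.cons_val_zero,
      Matrix.cons_val_one, Matrix.cons_val_two, Matrix.head_cons, Matrix.tail_cons]
  · rw [xThreeFull_eq, revN_productInfo_fin_three fullKernel_ne_zero fullKernel_calibrated]
    norm_num [sum_pair, fullKernel, ctrPrior, gspRevenue_one_fin_three, Matrix.cons_val_zero,
      Matrix.cons_val_one, Matrix.cons_val_two, Matrix.head_cons, Matrix.tail_cons]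
  · rw [xThreeNo_eq, revN_productInfo_fin_three noKernel_ne_zero noKernel_calibrated]
    norm_num [noKernel, ctrPrior, gspRevenue_one_fin_three, Matrix.cons_val_zero,
      Matrix.cons_val_one, Matrix.cons_val_two, Matrix.head_cons, Matrix.tail_cons]
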